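/- For all real b, c > -1, it holds that f(b,c) = ((c+1)/(b+1)) · f(b/2, c/2) · f((c+1)/2, (b+1)/2). -/

import Mathlib

open Filter Finset Topology

/-- The Thue–Morse sequence with values `±1`: `u n = (-1)^(s₂ n)` where `s₂ n`
is the sum of the binary digits of `n`. -/
def u (n : ℕ) : ℤ := (-1) ^ (Nat.digits 2 n).sum

/-!
Split the partial product up to `2N + 1` into its first factor and the pairs of factors
at `2n` and `2n + 1`. Since `u (2n) = u n` and `u (2n + 1) = -u n`, the factors at `2n` form the
partial product for `(b/2, c/2)` and the inverted factors at `2n + 1` the one for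
`((c+1)/2, (b+1)/2)`, while the factor at `1` is `(c+1)/(b+1)`. Passing to the limit along the
subsequence `2N + 1` gives the identity.
-/

lemma u_two_mul (n : ℕ) : u (2 * n) = u n := by
  rcases Nat.eq_zero_or_pos n with rfl | hn
  · rfl
  · unfold u
    rw [Nat.digits_def' (by norm_num) (by omega)]
    simp

lemma u_two_mul_add_one (n : ℕ) : u (2 * n + 1) = -u n := by
  unfold u
  rw [Nat.digits_def' (by norm_num) (by omega), Nat.mul_add_mod_self_left,
    Nat.mul_add_div (by norm_num), List.sum_cons, pow_add]
  simp

lemma prod_Icc_one_two_mul_add_one {M : Type*} [CommMonoid M] (g : ℕ → M) (N : ℕ) :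
    ∏ n ∈ Icc 1 (2 * N + 1), g n = g 1 * ∏ n ∈ Icc 1 N, g (2 * n) * g (2 * n + 1) := by
  induction N with
  | zero => simp
  | succ N ih =>
    rw [show 2 * (N + 1) + 1 = 2 * N + 1 + 1 + 1 by ring, prod_Icc_succ_top (by omega),
      prod_Icc_succ_top (by omega), ih, prod_Icc_succ_top (by omega)]
    simp only [mul_add, mul_one, mul_assoc]

noncomputable def thueMorseFactor (b c : ℝ) (n : ℕ) : ℝ :=
  (((n : ℝ) + b) / ((n : ℝ) + c)) ^ (u n)

lemma thueMorseFactor_one (b c : ℝ) : thueMorseFactor b c 1 = (c + 1) / (b + 1) := by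
  simp [thueMorseFactor, u, add_comm]

lemma thueMorseFactor_two_mul (b c : ℝ) (n : ℕ) :
    thueMorseFactor b c (2 * n) = thueMorseFactor (b / 2) (c / 2) n := by
  rw [thueMorseFactor, thueMorseFactor, u_two_mul]
  push_cast
  rw [show 2 * (n : ℝ) + b = 2 * (n + b / 2) by ring,
    show 2 * (n : ℝ) + c = 2 * (n + c / 2) by ring, mul_div_mul_left _ _ two_ne_zero]

lemma thueMorseFactor_two_mul_add_one (b c : ℝ) (n : ℕ) :
    thueMorseFactor b c (2 * n + 1) = thueMorseFactor ((c + 1) / 2) ((b + 1) / 2) n := by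
  rw [thueMorseFactor, thueMorseFactor, u_two_mul_add_one, zpow_neg, ← inv_zpow, inv_div]
  push_cast
  rw [show 2 * (n : ℝ) + 1 + b = 2 * (n + (b + 1) / 2) by ring,
    show 2 * (n : ℝ) + 1 + c = 2 * (n + (c + 1) / 2) by ring, mul_div_mul_left _ _ two_ne_zero]

lemma prod_thueMorseFactor_two_mul_add_one (b c : ℝ) (N : ℕ) :
    ∏ n ∈ Icc 1 (2 * N + 1), thueMorseFactor b c n =
      (c + 1) / (b + 1) * (∏ n ∈ Icc 1 N, thueMorseFactor (b / 2) (c / 2) n) *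
        ∏ n ∈ Icc 1 N, thueMorseFactor ((c + 1) / 2) ((b + 1) / 2) n := by
  simp only [prod_Icc_one_two_mul_add_one, thueMorseFactor_one, thueMorseFactor_two_mul,
    thueMorseFactor_two_mul_add_one, prod_mul_distrib, mul_assoc]

theorem stmt_4_general (f : ℝ → ℝ → ℝ)
    (hf : ∀ b c : ℝ, -1 < b → -1 < c →
      Tendsto (fun N : ℕ => ∏ n ∈ Finset.Icc 1 N,
        (((n : ℝ) + b) / ((n : ℝ) + c)) ^ (u n)) atTop (𝓝 (f b c))) :
    ∀ b c : ℝ, -1 < b → -1 < c →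
      f b c = ((c + 1) / (b + 1)) * f (b / 2) (c / 2) * f ((c + 1) / 2) ((b + 1) / 2) := by
  intro b c hb hc
  have hodd : Tendsto (fun N : ℕ => 2 * N + 1) atTop atTop :=
    tendsto_atTop_atTop.mpr fun m => ⟨m, fun n hn => by omega⟩
  have hsub : Tendsto (fun N => ∏ n ∈ Icc 1 (2 * N + 1), thueMorseFactor b c n) atTop
      (𝓝 (f b c)) := (hf b c hb hc).comp hodd
  have hsplit : Tendsto (fun N => ∏ n ∈ Icc 1 (2 * N + 1), thueMorseFactor b c n) atTop
      (𝓝 ((c + 1) / (b + 1) * f (b / 2) (c / 2) * f ((c + 1) / 2) ((b + 1) / 2))) := by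
    simp only [prod_thueMorseFactor_two_mul_add_one]
    exact (tendsto_const_nhds.mul (hf _ _ (by linarith) (by linarith))).mul
      (hf _ _ (by linarith) (by linarith))
  exact tendsto_nhds_unique hsub hsplit

/-- If `f b c` is, for `b, c > -1`, the (positive) limit of the partial products
`∏_{n=1}^{N} ((n+b)/(n+c))^{u_n}`, then
`f(b,c) = ((c+1)/(b+1)) · f(b/2, c/2) · f((c+1)/2, (b+1)/2)`. -/
theorem stmt_4 (f : ℝ → ℝ → ℝ)
    (hf : ∀ b c : ℝ, -1 < b → -1 < c →
      Tendsto (fun N : ℕ => ∏ n ∈ Finset.Icc 1 N,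
        (((n : ℝ) + b) / ((n : ℝ) + c)) ^ (u n)) atTop (𝓝 (f b c)))
    (hfpos : ∀ b c : ℝ, -1 < b → -1 < c → 0 < f b c) :
    ∀ b c : ℝ, -1 < b → -1 < c →
      f b c = ((c + 1) / (b + 1)) * f (b / 2) (c / 2) * f ((c + 1) / 2) ((b + 1) / 2) :=
  stmt_4_general f hf
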